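/- With ∂_M(ω) = −Σ_{k=1}^{s−1} (−1)^k M_k(ω) and ∂_I(ω) = Σ_{k=0}^{s} (−1)^k I_k(ω) extended linearly to the free abelian group Z[Ω] on all compositions (s denoting the length of ω), the two differentials anticommute: ∂_M ∘ ∂_I + ∂_I ∘ ∂_M = 0. Consequently ∂ = ∂_M + ∂_I satisfies ∂ ∘ ∂ = 0. -/

import Mathlib

/-!
Applied to a composition `ω`, each of `∂_M ∂_M`, `∂_I ∂_I` and `∂_M ∂_I + ∂_I ∂_M` is a signed sum
of compositions obtained from `ω` by two operations, the sign being `(-1)` to the sum of the two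
indices. With the indexing of `mergeAt` and `insertAt2`, the operations satisfy
`M_j M_i = M_{i-1} M_j` (`j < i`), `I_j I_k = I_{k+1} I_j` (`j ≤ k`),
`M_b I_a = I_{a-1} M_b` (`b + 2 ≤ a`), `M_b I_a = I_a M_{b-1}` (`a < b`) and
`M_a I_a = M_a I_{a+1}` (both merge the new `2` into `ω_a`). Each relation matches two terms
whose index sums differ by one, and these matchings form fixed-point-free involutions of the
index sets, so all three sums vanish. Finally `∂² = ∂_M² + (∂_M ∂_I + ∂_I ∂_M) + ∂_I²`.
-/

/-- The merge operation (0-indexed at `i`); with 1-indexed notation `M_k = mergeAt · (k-1)`. -/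
def mergeAt (l : List ℕ) (i : ℕ) : List ℕ :=
  l.take i ++ [l.getD i 0 + l.getD (i + 1) 0] ++ l.drop (i + 2)

/-- The insert operation `I_k`: insert a new entry `2` after the `k`-th entry. -/
def insertAt2 (l : List ℕ) (k : ℕ) : List ℕ :=
  l.take k ++ [2] ++ l.drop k

/-- `∂_M(ω) = −Σ_{k=1}^{s−1} (−1)^k M_k(ω)`. -/
noncomputable def dM (ω : List ℕ) : List ℕ →₀ ℤ :=
  -∑ k ∈ Finset.Ico 1 ω.length, ((-1 : ℤ) ^ k) • Finsupp.single (mergeAt ω (k - 1)) (1 : ℤ)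

/-- `∂_I(ω) = Σ_{k=0}^{s} (−1)^k I_k(ω)`. -/
noncomputable def dI (ω : List ℕ) : List ℕ →₀ ℤ :=
  ∑ k ∈ Finset.range (ω.length + 1), ((-1 : ℤ) ^ k) • Finsupp.single (insertAt2 ω k) (1 : ℤ)

/-- The merge differential `∂_M : ℤ[Ω] → ℤ[Ω]`. -/
noncomputable def boundaryM : (List ℕ →₀ ℤ) →ₗ[ℤ] (List ℕ →₀ ℤ) :=
  Finsupp.lsum ℤ fun ω => LinearMap.toSpanSingleton ℤ _ (dM ω)

/-- The insert differential `∂_I : ℤ[Ω] → ℤ[Ω]`. -/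
noncomputable def boundaryI : (List ℕ →₀ ℤ) →ₗ[ℤ] (List ℕ →₀ ℤ) :=
  Finsupp.lsum ℤ fun ω => LinearMap.toSpanSingleton ℤ _ (dI ω)

open Finset

theorem Finset.sum_neg_one_pow_smul_eq_zero_of_involution {α R M : Type*} [Ring R]
    [AddCommGroup M] [Module R M] {s : Finset α} (e : α → ℕ) (x : α → M) (g : α → α)
    (hg_mem : ∀ p ∈ s, g p ∈ s) (hg_invol : ∀ p ∈ s, g (g p) = p) (hx : ∀ p ∈ s, x (g p) = x p)
    (he : ∀ p ∈ s, Odd (e p + e (g p))) :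
    ∑ p ∈ s, (-1 : R) ^ e p • x p = 0 := by
  refine sum_involution (fun p _ => g p) (fun p hp => ?_) (fun p hp _ hfix => ?_) hg_mem hg_invol
  · have hsign : (-1 : R) ^ e (g p) = -(-1) ^ e p := by
      rcases Nat.even_or_odd (e p) with h | h
      · rw [h.neg_one_pow, ((Nat.odd_add'.1 (he p hp)).2 h).neg_one_pow]
      · rw [h.neg_one_pow, ((Nat.odd_add.1 (he p hp)).1 h).neg_one_pow, neg_neg]
    rw [hx p hp, hsign, neg_smul, add_neg_cancel]
  · have := he p hp
    rw [hfix, ← two_mul] at this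
    exact Nat.not_odd_iff_even.2 (even_two_mul _) this

@[simp] lemma insertAt2_zero (l : List ℕ) : insertAt2 l 0 = 2 :: l := by simp [insertAt2]

@[simp] lemma insertAt2_cons_succ (x : ℕ) (l : List ℕ) (k : ℕ) :
    insertAt2 (x :: l) (k + 1) = x :: insertAt2 l k := by
  simp [insertAt2]

@[simp] lemma mergeAt_cons_succ (x : ℕ) (l : List ℕ) (i : ℕ) :
    mergeAt (x :: l) (i + 1) = x :: mergeAt l i := by
  simp [mergeAt]

@[simp] lemma mergeAt_cons_cons_zero (x y : ℕ) (l : List ℕ) :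
    mergeAt (x :: y :: l) 0 = (x + y) :: l := by
  simp [mergeAt]

lemma length_insertAt2 {l : List ℕ} {k : ℕ} (h : k ≤ l.length) :
    (insertAt2 l k).length = l.length + 1 := by
  simp [insertAt2]; omega

lemma length_mergeAt {l : List ℕ} {i : ℕ} (h : i + 1 < l.length) :
    (mergeAt l i).length = l.length - 1 := by
  simp [mergeAt]; omega

lemma mergeAt_mergeAt_of_lt {l : List ℕ} {i j : ℕ} (hji : j < i) (hi : i + 1 < l.length) :
    mergeAt (mergeAt l i) j = mergeAt (mergeAt l j) (i - 1) := by
  induction l generalizing i j with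
  | nil => simp at hi
  | cons x l ih =>
    obtain ⟨i, rfl⟩ : ∃ i', i = i' + 1 := ⟨i - 1, by omega⟩
    rcases j with _ | j
    · rcases l with _ | ⟨y, _ | ⟨z, l⟩⟩ <;> simp at hi
      rcases i with _ | i <;> simp [Nat.add_assoc]
    · simp only [mergeAt_cons_succ, List.length_cons] at hi ⊢
      obtain ⟨i, rfl⟩ : ∃ i', i = i' + 1 := ⟨i - 1, by omega⟩
      simp [ih (i := i + 1) (j := j) (by omega) (by omega)]

lemma insertAt2_insertAt2_of_le {l : List ℕ} {j k : ℕ} (hjk : j ≤ k) :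
    insertAt2 (insertAt2 l k) j = insertAt2 (insertAt2 l j) (k + 1) := by
  induction l generalizing j k with
  | nil => rcases j with _ | j <;> rcases k with _ | k <;> simp_all [insertAt2]
  | cons x l ih =>
    rcases j with _ | j
    · simp
    · obtain ⟨k, rfl⟩ : ∃ k', k = k' + 1 := ⟨k - 1, by omega⟩
      simp [ih (by omega : j ≤ k)]

lemma mergeAt_insertAt2_of_add_two_le {l : List ℕ} {a b : ℕ} (hba : b + 2 ≤ a)
    (ha : a ≤ l.length) : mergeAt (insertAt2 l a) b = insertAt2 (mergeAt l b) (a - 1) := by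
  induction l generalizing a b with
  | nil => simp at ha; omega
  | cons x l ih =>
    obtain ⟨a, rfl⟩ : ∃ a', a = a' + 1 := ⟨a - 1, by omega⟩
    rcases b with _ | b
    · rcases l with _ | ⟨y, l⟩
      · simp at ha; omega
      · obtain ⟨a, rfl⟩ : ∃ a', a = a' + 1 := ⟨a - 1, by omega⟩
        simp
    · obtain ⟨a, rfl⟩ : ∃ a', a = a' + 1 := ⟨a - 1, by omega⟩
      simp_all [ih (a := a + 1) (b := b) (by omega) (by simp at ha; omega)]

lemma mergeAt_insertAt2_of_lt {l : List ℕ} {a b : ℕ} (hab : a < b) (hb : b < l.length) :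
    mergeAt (insertAt2 l a) b = insertAt2 (mergeAt l (b - 1)) a := by
  induction l generalizing a b with
  | nil => simp at hb
  | cons x l ih =>
    obtain ⟨b, rfl⟩ : ∃ b', b = b' + 1 := ⟨b - 1, by omega⟩
    rcases a with _ | a
    · simp
    · obtain ⟨b, rfl⟩ : ∃ b', b = b' + 1 := ⟨b - 1, by omega⟩
      simp_all [ih (a := a) (b := b + 1) (by omega) (by simp at hb; omega)]

lemma mergeAt_insertAt2_self {l : List ℕ} {k : ℕ} (hk : k < l.length) :
    mergeAt (insertAt2 l k) k = mergeAt (insertAt2 l (k + 1)) k := by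
  induction l generalizing k with
  | nil => simp at hk
  | cons x l ih =>
    rcases k with _ | k
    · simp [Nat.add_comm]
    · simp [ih (k := k) (by simpa using hk)]

lemma dM_eq_sum_range (ω : List ℕ) :
    dM ω = ∑ i ∈ range (ω.length - 1), (-1 : ℤ) ^ i • Finsupp.single (mergeAt ω i) 1 := by
  rw [dM, sum_Ico_eq_sum_range, ← sum_neg_distrib]
  refine sum_congr rfl fun i _ => ?_
  rw [Nat.add_sub_cancel_left, pow_add, pow_one, mul_comm, mul_smul, neg_one_smul, smul_neg,
    neg_neg]

lemma boundaryM_single_one (ω : List ℕ) : boundaryM (Finsupp.single ω 1) = dM ω := by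
  rw [boundaryM, Finsupp.lsum_single, LinearMap.toSpanSingleton_apply, one_smul]

lemma boundaryI_single_one (ω : List ℕ) : boundaryI (Finsupp.single ω 1) = dI ω := by
  rw [boundaryI, Finsupp.lsum_single, LinearMap.toSpanSingleton_apply, one_smul]

lemma boundaryM_signed_sum {n m : ℕ} {f : ℕ → List ℕ} (hf : ∀ i < n, (f i).length = m + 1) :
    boundaryM (∑ i ∈ range n, (-1 : ℤ) ^ i • Finsupp.single (f i) 1) =
      ∑ p ∈ range n ×ˢ range m,
        (-1 : ℤ) ^ (p.1 + p.2) • Finsupp.single (mergeAt (f p.1) p.2) 1 := by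
  rw [map_sum, sum_product]
  refine sum_congr rfl fun i hi => ?_
  rw [map_smul, boundaryM_single_one, dM_eq_sum_range, hf i (mem_range.1 hi),
    Nat.add_sub_cancel, smul_sum]
  simp only [smul_smul, pow_add]

lemma boundaryI_signed_sum {n m : ℕ} {f : ℕ → List ℕ} (hf : ∀ i < n, (f i).length = m) :
    boundaryI (∑ i ∈ range n, (-1 : ℤ) ^ i • Finsupp.single (f i) 1) =
      ∑ p ∈ range n ×ˢ range (m + 1),
        (-1 : ℤ) ^ (p.1 + p.2) • Finsupp.single (insertAt2 (f p.1) p.2) 1 := by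
  rw [map_sum, sum_product]
  refine sum_congr rfl fun i hi => ?_
  rw [map_smul, boundaryI_single_one, dI, hf i (mem_range.1 hi), smul_sum]
  simp only [smul_smul, pow_add]

lemma boundaryM_dM (ω : List ℕ) : boundaryM (dM ω) = 0 := by
  rw [dM_eq_sum_range, boundaryM_signed_sum (m := ω.length - 2)
    fun i hi => by rw [length_mergeAt (by omega)]; omega]
  refine sum_neg_one_pow_smul_eq_zero_of_involution (fun p => p.1 + p.2)
    (fun p => Finsupp.single (mergeAt (mergeAt ω p.1) p.2) 1)
    (fun p => if p.2 < p.1 then (p.2, p.1 - 1) else (p.2 + 1, p.1)) ?_ ?_ ?_ ?_ <;>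
    rintro ⟨i, j⟩ hp <;> simp only [mem_product, mem_range] at hp <;> dsimp only
  · split_ifs <;> simp only [mem_product, mem_range] <;> omega
  · split_ifs <;> simp only [Prod.mk.injEq, and_true, true_and] at * <;> omega
  · split_ifs with h
    · rw [mergeAt_mergeAt_of_lt h (by omega)]
    · rw [mergeAt_mergeAt_of_lt (by omega : i < j + 1) (by omega), Nat.add_sub_cancel]
  · split_ifs <;> rw [Nat.odd_iff] <;> omega

lemma boundaryI_dI (ω : List ℕ) : boundaryI (dI ω) = 0 := by
  rw [dI, boundaryI_signed_sum (m := ω.length + 1)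
    fun k hk => length_insertAt2 (by omega)]
  refine sum_neg_one_pow_smul_eq_zero_of_involution (fun p => p.1 + p.2)
    (fun p => Finsupp.single (insertAt2 (insertAt2 ω p.1) p.2) 1)
    (fun p => if p.2 ≤ p.1 then (p.2, p.1 + 1) else (p.2 - 1, p.1)) ?_ ?_ ?_ ?_ <;>
    rintro ⟨k, j⟩ hp <;> simp only [mem_product, mem_range] at hp <;> dsimp only
  · split_ifs <;> simp only [mem_product, mem_range] <;> omega
  · split_ifs <;> simp only [Prod.mk.injEq, and_true, true_and] at * <;> omega
  · split_ifs with h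
    · rw [insertAt2_insertAt2_of_le h]
    · rw [insertAt2_insertAt2_of_le (by omega : k ≤ j - 1), Nat.sub_add_cancel (by omega)]
  · split_ifs <;> rw [Nat.odd_iff] <;> omega

def mergeInsertTerm (ω : List ℕ) : (ℕ × ℕ) ⊕ (ℕ × ℕ) → List ℕ
  | .inl (a, b) => mergeAt (insertAt2 ω a) b
  | .inr (a, b) => insertAt2 (mergeAt ω a) b

def mergeInsertPairing : (ℕ × ℕ) ⊕ (ℕ × ℕ) → (ℕ × ℕ) ⊕ (ℕ × ℕ)
  | .inl (a, b) =>
    if b + 2 ≤ a then .inr (b, a - 1)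
    else if a < b then .inr (b - 1, a)
    else if b = a then .inl (a + 1, a)
    else .inl (a - 1, a - 1)
  | .inr (a, b) => if a < b then .inl (b + 1, a) else .inl (b, a + 1)

lemma mergeInsertTerm_mergeInsertPairing {ω : List ℕ} {q : (ℕ × ℕ) ⊕ (ℕ × ℕ)}
    (hq : q ∈ (range (ω.length + 1) ×ˢ range ω.length).disjSum
      (range (ω.length - 1) ×ˢ range (ω.length - 1 + 1))) :
    mergeInsertTerm ω (mergeInsertPairing q) = mergeInsertTerm ω q := by
  rcases q with ⟨a, b⟩ | ⟨a, b⟩ <;>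
    simp only [inl_mem_disjSum, inr_mem_disjSum, mem_product, mem_range] at hq <;>
    simp only [mergeInsertPairing]
  · split_ifs with h₁ h₂ h₃ <;> simp only [mergeInsertTerm]
    · rw [mergeAt_insertAt2_of_add_two_le h₁ (by omega)]
    · rw [mergeAt_insertAt2_of_lt h₂ (by omega)]
    · rw [h₃, mergeAt_insertAt2_self (by omega)]
    · obtain rfl : a = b + 1 := by omega
      rw [Nat.add_sub_cancel, mergeAt_insertAt2_self (by omega)]
  · split_ifs with h <;> simp only [mergeInsertTerm]
    · rw [mergeAt_insertAt2_of_add_two_le (by omega) (by omega), Nat.add_sub_cancel]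
    · rw [mergeAt_insertAt2_of_lt (by omega) (by omega), Nat.add_sub_cancel]

lemma boundaryM_dI_add_boundaryI_dM (ω : List ℕ) :
    boundaryM (dI ω) + boundaryI (dM ω) = 0 := by
  rw [dI, boundaryM_signed_sum (m := ω.length) fun k hk => length_insertAt2 (by omega),
    dM_eq_sum_range, boundaryI_signed_sum (m := ω.length - 1)
      fun i hi => length_mergeAt (by omega)]
  refine (sum_disjSum _ _ fun q =>
    (-1 : ℤ) ^ q.elim (fun p => p.1 + p.2) (fun p => p.1 + p.2) •
      Finsupp.single (mergeInsertTerm ω q) 1).symm.trans ?_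
  refine sum_neg_one_pow_smul_eq_zero_of_involution _ _ mergeInsertPairing ?_ ?_
    (fun q hq => by rw [mergeInsertTerm_mergeInsertPairing hq]) ?_ <;>
    rintro (⟨a, b⟩ | ⟨a, b⟩) hp <;>
    simp only [inl_mem_disjSum, inr_mem_disjSum, mem_product, mem_range] at hp <;>
    simp only [mergeInsertPairing]
  · split_ifs <;> simp only [inl_mem_disjSum, inr_mem_disjSum, mem_product, mem_range] <;> omega
  · split_ifs <;> simp only [inl_mem_disjSum, mem_product, mem_range] <;> omega
  · split_ifs <;> dsimp only <;> split_ifs <;>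
      (try simp only [Sum.inl.injEq, Prod.mk.injEq, and_true, true_and]) <;> omega
  · split_ifs <;> dsimp only <;> split_ifs <;>
      (try simp only [Sum.inr.injEq, Prod.mk.injEq, and_true, true_and]) <;> omega
  · split_ifs <;> simp only [Sum.elim_inl, Sum.elim_inr] <;> rw [Nat.odd_iff] <;> omega
  · split_ifs <;> simp only [Sum.elim_inl, Sum.elim_inr] <;> rw [Nat.odd_iff] <;> omega

theorem boundaryM_comp_boundaryM : boundaryM ∘ₗ boundaryM = 0 :=
  Finsupp.basisSingleOne.ext fun ω => by
    rw [Finsupp.coe_basisSingleOne, LinearMap.comp_apply, boundaryM_single_one, boundaryM_dM,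
      LinearMap.zero_apply]

theorem boundaryI_comp_boundaryI : boundaryI ∘ₗ boundaryI = 0 :=
  Finsupp.basisSingleOne.ext fun ω => by
    rw [Finsupp.coe_basisSingleOne, LinearMap.comp_apply, boundaryI_single_one, boundaryI_dI,
      LinearMap.zero_apply]

theorem boundaryM_comp_boundaryI_add_boundaryI_comp_boundaryM :
    boundaryM ∘ₗ boundaryI + boundaryI ∘ₗ boundaryM = 0 :=
  Finsupp.basisSingleOne.ext fun ω => by
    rw [Finsupp.coe_basisSingleOne, LinearMap.add_apply, LinearMap.comp_apply,
      LinearMap.comp_apply, boundaryI_single_one, boundaryM_single_one,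
      boundaryM_dI_add_boundaryI_dM, LinearMap.zero_apply]

/-- The two differentials anticommute: `∂_M ∘ ∂_I + ∂_I ∘ ∂_M = 0`; consequently
`∂ = ∂_M + ∂_I` satisfies `∂ ∘ ∂ = 0`. -/
theorem boundaryM_boundaryI_anticommute :
    boundaryM.comp boundaryI + boundaryI.comp boundaryM = 0 ∧
    (boundaryM + boundaryI).comp (boundaryM + boundaryI) = 0 := by
  refine ⟨boundaryM_comp_boundaryI_add_boundaryI_comp_boundaryM, ?_⟩
  rw [LinearMap.add_comp, LinearMap.comp_add, LinearMap.comp_add, boundaryM_comp_boundaryM,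
    boundaryI_comp_boundaryI, zero_add, add_zero]
  exact boundaryM_comp_boundaryI_add_boundaryI_comp_boundaryM
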